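/- arXiv:2312.02495 — 4 statements merged into one kernel-verified Lean document; each statement's English description precedes it below -/
import Mathlib

section
/- Let $p$ be a prime, $n \geq 2$, and let $a \in (\mathbb{Z}[1/p]/\mathbb{Z})^n$ be a nonzero element with $v_p(a) = p^\ell$ (the smallest power of $p$ annihilating $a$). Then the set of $u \in \mathbb{P}\mathbb{Z}_p^{n-1}$ with $\langle u, a \rangle = 0$ in $\mathbb{Q}/\mathbb{Z}$ has normalized measure $|\mathbb{P}(\mathbb{Z}/p^\ell\mathbb{Z})^{n-2}| / |\mathbb{P}(\mathbb{Z}/p^\ell\mathbb{Z})^{n-1}|$. -/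
open MeasureTheory

noncomputable section

instance (p : ℕ) [Fact p.Prime] : MeasurableSpace ℤ_[p] := borel _
instance (p : ℕ) [Fact p.Prime] : BorelSpace ℤ_[p] := ⟨rfl⟩

/-- The Haar probability measure on `ℤ_p^n`. -/
def padicHaar (p : ℕ) [Fact p.Prime] (n : ℕ) : Measure (Fin n → ℤ_[p]) :=
  Measure.addHaarMeasure ⟨⟨Set.univ, isCompact_univ⟩, by simp⟩

/-- The type of orbits of vectors in `(ZMod N)^m` under scaling by units. -/
def ProjClasses (N m : ℕ) : Type :=
  Quotient (MulAction.orbitRel (ZMod N)ˣ (Fin m → ZMod N))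

/-- Cardinality of `ℙ (ZMod N)^(m-1)`: classes, under unit scaling, of vectors in
`(ZMod N)^m` with at least one unit coordinate. -/
def projCardUnit (N m : ℕ) : ℕ :=
  Nat.card {x : ProjClasses N m //
    ∃ v : Fin m → ZMod N, Quotient.mk (MulAction.orbitRel (ZMod N)ˣ (Fin m → ZMod N)) v = x ∧
      ∃ i, IsUnit (v i)}

/-! ### Auxiliary lemmas about units in `ZMod (p ^ ℓ)` -/

section ZModAux

variable {p : ℕ} [Fact p.Prime] {ℓ : ℕ}

lemma aux_dvd_of_not_isUnit (hℓ : 1 ≤ ℓ) {x : ZMod (p ^ ℓ)} (hx : ¬ IsUnit x) :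
    ∃ y : ZMod (p ^ ℓ), x = p * y := by
  haveI : NeZero (p ^ ℓ) := ⟨pow_ne_zero _ (Fact.out (p := p.Prime)).pos.ne'⟩
  rw [← ZMod.natCast_zmod_val x, ZMod.isUnit_iff_coprime,
    Nat.coprime_pow_right_iff hℓ, Nat.coprime_comm,
    (Fact.out (p := p.Prime)).coprime_iff_not_dvd, not_not] at hx
  obtain ⟨k, hk⟩ := hx
  exact ⟨(k : ZMod (p ^ ℓ)), by rw [← ZMod.natCast_zmod_val x, hk]; push_cast; ring⟩

lemma aux_not_isUnit_of_dvd (hℓ : 1 ≤ ℓ) {x y : ZMod (p ^ ℓ)} (h : x = p * y) : ¬ IsUnit x := by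
  intro hx
  have hp : IsUnit ((p : ZMod (p ^ ℓ))) := isUnit_of_mul_isUnit_left (h ▸ hx)
  have h2 : ((p : ZMod (p ^ ℓ)))^ℓ = 0 := by
    rw [← Nat.cast_pow, ZMod.natCast_self]
  haveI : Fact (1 < p ^ ℓ) :=
    ⟨Nat.one_lt_pow (by omega) (Fact.out (p := p.Prime)).one_lt⟩
  exact (hp.pow ℓ).ne_zero h2

lemma aux_padic_isUnit_iff (hℓ : 1 ≤ ℓ) (x : ℤ_[p]) :
    IsUnit (PadicInt.toZModPow ℓ x) ↔ IsUnit x := by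
  constructor
  · intro h
    by_contra hx
    have hmem : x ∈ IsLocalRing.maximalIdeal ℤ_[p] := hx
    rw [PadicInt.maximalIdeal_eq_span_p, Ideal.mem_span_singleton] at hmem
    obtain ⟨y, hy⟩ := hmem
    have : PadicInt.toZModPow ℓ x = (p : ZMod (p ^ ℓ)) * PadicInt.toZModPow ℓ y := by
      rw [hy, map_mul, map_natCast]
    exact aux_not_isUnit_of_dvd hℓ this h
  · exact fun h => h.map _

end ZModAux

/-! ### Counting vectors with a unit coordinate via orbits -/

section Counting

open MulAction

def unitVecs (N m : ℕ) : SubMulAction (ZMod N)ˣ (Fin m → ZMod N) where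
  carrier := {v | ∃ i, IsUnit (v i)}
  smul_mem' := by
    rintro c v ⟨i, hi⟩
    exact ⟨i, by simpa [Units.smul_def] using (c.isUnit.mul hi)⟩

lemma stabilizer_unitVecs (N m : ℕ) (b : unitVecs N m) :
    stabilizer (ZMod N)ˣ b = ⊥ := by
  ext c
  simp only [mem_stabilizer_iff, Subgroup.mem_bot]
  constructor
  · intro h
    obtain ⟨i, hi⟩ := b.2
    have : (c • b.1) i = b.1 i := by
      rw [← SubMulAction.val_smul, h]
    rw [Pi.smul_apply, Units.smul_def] at this
    obtain ⟨u, hu⟩ := hi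
    have hcu : c * u = u := Units.ext (by simpa [hu] using this)
    simpa using mul_right_cancel (hcu.trans (one_mul u).symm)
  · rintro rfl; simp

lemma projEquiv (N m : ℕ) :
    Nonempty (orbitRel.Quotient (ZMod N)ˣ (unitVecs N m) ≃
      {x : ProjClasses N m //
        ∃ v : Fin m → ZMod N, Quotient.mk (orbitRel (ZMod N)ˣ (Fin m → ZMod N)) v = x ∧
          ∃ i, IsUnit (v i)}) := by
  refine ⟨Equiv.ofBijective
    (Quotient.lift (fun v => ⟨Quotient.mk _ v.1, v.1, rfl, v.2⟩) ?_) ⟨?_, ?_⟩⟩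
  · intro v w hvw
    obtain ⟨c, hc⟩ := hvw
    exact Subtype.ext (Quotient.sound ⟨c, congrArg Subtype.val hc⟩)
  · rintro ⟨v⟩ ⟨w⟩ h
    have h' : Quotient.mk (orbitRel (ZMod N)ˣ (Fin m → ZMod N)) v.1 =
        Quotient.mk _ w.1 := congrArg Subtype.val h
    obtain ⟨c, hc⟩ := Quotient.exact h'
    exact Quotient.sound ⟨c, Subtype.ext hc⟩
  · rintro ⟨x, v, rfl, hv⟩
    exact ⟨Quotient.mk _ (⟨v, hv⟩ : unitVecs N m), rfl⟩

lemma card_unitVecs (N m : ℕ) :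
    Nat.card {v : Fin m → ZMod N // ∃ i, IsUnit (v i)} =
      projCardUnit N m * Nat.card (ZMod N)ˣ := by
  obtain ⟨e3⟩ := projEquiv N m
  have eo : ∀ ω : orbitRel.Quotient (ZMod N)ˣ (unitVecs N m),
      orbit (ZMod N)ˣ (Quotient.out ω) ≃ (ZMod N)ˣ := fun ω =>
    (orbitEquivQuotientStabilizer (ZMod N)ˣ (Quotient.out ω)).trans <|
      ((QuotientGroup.quotientMulEquivOfEq
        (stabilizer_unitVecs N m (Quotient.out ω))).trans QuotientGroup.quotientBot).toEquiv
  have e2 : (unitVecs N m : Type) ≃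
      (orbitRel.Quotient (ZMod N)ˣ (unitVecs N m)) × (ZMod N)ˣ :=
    (selfEquivSigmaOrbits (ZMod N)ˣ _).trans <|
      (Equiv.sigmaCongrRight eo).trans (Equiv.sigmaEquivProd _ _)
  calc Nat.card {v : Fin m → ZMod N // ∃ i, IsUnit (v i)}
      = Nat.card ((orbitRel.Quotient (ZMod N)ˣ (unitVecs N m)) × (ZMod N)ˣ) :=
        Nat.card_congr e2
    _ = projCardUnit N m * Nat.card (ZMod N)ˣ := by
        rw [Nat.card_prod, Nat.card_congr e3]; rfl

variable {p : ℕ} [Fact p.Prime] {ℓ : ℕ}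

lemma hyperplane_card (hℓ : 1 ≤ ℓ) (m : ℕ) (a' : Fin (m+1) → ZMod (p^ℓ)) (i₀ : Fin (m+1))
    (hu : IsUnit (a' i₀)) :
    Nat.card {v : Fin (m+1) → ZMod (p^ℓ) // (∃ i, IsUnit (v i)) ∧ ∑ i, a' i * v i = 0} =
    Nat.card {w : Fin m → ZMod (p^ℓ) // ∃ j, IsUnit (w j)} := by
  obtain ⟨c, hc⟩ := hu
  have key : ∀ v : Fin (m+1) → ZMod (p^ℓ), (∑ i, a' i * v i = 0) →
      (∃ i, IsUnit (v i)) → ∃ j, IsUnit (v (i₀.succAbove j)) := by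
    rintro v hsum ⟨i, hi⟩
    by_contra hno
    push_neg at hno
    have hne : i = i₀ := by
      by_contra hne
      obtain ⟨j, rfl⟩ := Fin.exists_succAbove_eq hne
      exact hno j hi
    rw [hne] at hi
    choose y hy using fun j => aux_dvd_of_not_isUnit hℓ (hno j)
    have hsum' : a' i₀ * v i₀ =
        (p : ZMod (p^ℓ)) * (- ∑ j, a' (i₀.succAbove j) * y j) := by
      rw [Fin.sum_univ_succAbove _ i₀] at hsum
      have : ∑ j, a' (i₀.succAbove j) * v (i₀.succAbove j) =
          (p : ZMod (p^ℓ)) * ∑ j, a' (i₀.succAbove j) * y j := by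
        rw [Finset.mul_sum]
        exact Finset.sum_congr rfl fun j _ => by rw [hy j]; ring
      rw [this] at hsum
      linear_combination hsum
    have : v i₀ = (p : ZMod (p^ℓ)) * (↑c⁻¹ * (- ∑ j, a' (i₀.succAbove j) * y j)) := by
      calc v i₀ = ↑c⁻¹ * (a' i₀ * v i₀) := by
            rw [← hc, ← mul_assoc, Units.inv_mul, one_mul]
        _ = (p : ZMod (p^ℓ)) * (↑c⁻¹ * (- ∑ j, a' (i₀.succAbove j) * y j)) := by
            rw [hsum']; ring
    exact aux_not_isUnit_of_dvd hℓ this hi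
  refine Nat.card_congr (Equiv.ofBijective
    (fun v => ⟨i₀.removeNth v.1, by
      obtain ⟨j, hj⟩ := key v.1 v.2.2 v.2.1; exact ⟨j, hj⟩⟩) ⟨?_, ?_⟩)
  · rintro ⟨v, hv1, hv2⟩ ⟨v', hv1', hv2'⟩ h
    have hr : i₀.removeNth v = i₀.removeNth v' := congrArg Subtype.val h
    have hsum : ∀ (u : Fin (m+1) → ZMod (p^ℓ)), ∑ i, a' i * u i =
        a' i₀ * u i₀ + ∑ j, a' (i₀.succAbove j) * u (i₀.succAbove j) :=
      fun u => Fin.sum_univ_succAbove _ i₀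
    have h0 : a' i₀ * v i₀ = a' i₀ * v' i₀ := by
      have e1 := (hsum v).symm.trans hv2
      have e2 := (hsum v').symm.trans hv2'
      have : ∀ j, v (i₀.succAbove j) = v' (i₀.succAbove j) :=
        fun j => congrFun hr j
      simp only [this] at e1
      linear_combination e1 - e2
    have hvi : v i₀ = v' i₀ := by
      calc v i₀ = ↑c⁻¹ * (a' i₀ * v i₀) := by
            rw [← hc, ← mul_assoc, Units.inv_mul, one_mul]
        _ = ↑c⁻¹ * (a' i₀ * v' i₀) := by rw [h0]
        _ = v' i₀ := by rw [← hc, ← mul_assoc, Units.inv_mul, one_mul]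
    refine Subtype.ext (funext fun i => ?_)
    rcases eq_or_ne i i₀ with rfl | hne
    · exact hvi
    · obtain ⟨j, rfl⟩ := Fin.exists_succAbove_eq hne
      exact congrFun hr j
  · rintro ⟨w, j, hj⟩
    refine ⟨⟨i₀.insertNth (↑c⁻¹ * (- ∑ j, a' (i₀.succAbove j) * w j)) w, ?_, ?_⟩, ?_⟩
    · exact ⟨i₀.succAbove j, by rw [Fin.insertNth_apply_succAbove]; exact hj⟩
    · rw [Fin.sum_univ_succAbove _ i₀]
      simp only [Fin.insertNth_apply_same, Fin.insertNth_apply_succAbove]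
      rw [← mul_assoc, ← hc, Units.mul_inv]
      ring
    · exact Subtype.ext (by simp)

end Counting

/-! ### Measure computations -/

section MeasureAux

variable (p : ℕ) [Fact p.Prime] (n ℓ : ℕ)

instance : (padicHaar p n).IsAddLeftInvariant := by
  unfold padicHaar; infer_instance

lemma padicHaar_univ : padicHaar p n Set.univ = 1 :=
  Measure.addHaarMeasure_self (K₀ := ⟨⟨Set.univ, isCompact_univ⟩, by simp⟩)

lemma measurable_fiber0 :
    MeasurableSet ((fun u i => PadicInt.toZModPow ℓ (u i)) ⁻¹' {0} : Set (Fin n → ℤ_[p])) := by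
  have : ((fun u i => PadicInt.toZModPow ℓ (u i)) ⁻¹' {0} : Set (Fin n → ℤ_[p])) =
      Set.univ.pi fun _ => {x : ℤ_[p] | ‖x‖ ≤ (p : ℝ) ^ (-(ℓ : ℤ))} := by
    ext u
    simp only [Set.mem_preimage, Set.mem_singleton_iff, funext_iff, Set.mem_pi, Set.mem_univ,
      forall_const, Set.mem_setOf_eq, Pi.zero_apply]
    refine forall_congr' fun i => ?_
    rw [PadicInt.norm_le_pow_iff_mem_span_pow, ← PadicInt.ker_toZModPow, RingHom.mem_ker]
  rw [this]
  exact MeasurableSet.univ_pi fun _ =>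
    (IsClosed.preimage continuous_norm isClosed_Iic).measurableSet

lemma fiber_shift (t : Fin n → ZMod (p ^ ℓ)) :
    ((fun u i => PadicInt.toZModPow ℓ (u i)) ⁻¹' {t} : Set (Fin n → ℤ_[p])) =
      (fun u => (fun i => -(((t i).val : ℤ_[p]))) + u) ⁻¹'
        ((fun u i => PadicInt.toZModPow ℓ (u i)) ⁻¹' {0}) := by
  haveI : NeZero (p ^ ℓ) := ⟨pow_ne_zero _ (Fact.out (p := p.Prime)).pos.ne'⟩
  ext u
  simp only [Set.mem_preimage, Set.mem_singleton_iff, funext_iff, Pi.add_apply, Pi.zero_apply]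
  refine forall_congr' fun i => ?_
  rw [map_add, map_neg, map_natCast, ZMod.natCast_zmod_val, neg_add_eq_zero, eq_comm]

lemma padicHaar_fiber (t : Fin n → ZMod (p ^ ℓ)) :
    padicHaar p n ((fun u i => PadicInt.toZModPow ℓ (u i)) ⁻¹' {t}) =
      padicHaar p n ((fun u i => PadicInt.toZModPow ℓ (u i)) ⁻¹' {0}) := by
  rw [fiber_shift]
  exact measure_preimage_add (padicHaar p n) _ _

lemma padicHaar_preimage (S : Set (Fin n → ZMod (p ^ ℓ))) :
    padicHaar p n ((fun u i => PadicInt.toZModPow ℓ (u i)) ⁻¹' S) =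
      (Nat.card S) * padicHaar p n ((fun u i => PadicInt.toZModPow ℓ (u i)) ⁻¹' {0}) := by
  classical
  haveI : NeZero (p ^ ℓ) := ⟨pow_ne_zero _ (Fact.out (p := p.Prime)).pos.ne'⟩
  haveI : Fintype S := Fintype.ofFinite _
  have hS : S = ⋃ t : S, {(t : Fin n → ZMod (p ^ ℓ))} := by
    ext x; simp
  rw [hS, Set.preimage_iUnion, measure_iUnion, tsum_eq_sum (s := Finset.univ) (by simp)]
  · simp only [padicHaar_fiber]
    rw [Finset.sum_const, nsmul_eq_mul]
    congr 1
    simp [Nat.card_eq_fintype_card]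
  · intro s t hst
    apply Set.disjoint_left.mpr
    intro u hu hu'
    simp only [Set.mem_preimage, Set.mem_singleton_iff] at hu hu'
    exact hst (Subtype.ext (hu ▸ hu'))
  · intro t
    rw [fiber_shift]
    exact (measurable_fiber0 p n ℓ).preimage (by fun_prop)

end MeasureAux

/-- `ℙ ℤ_p^(n-1)` is modelled by the set `U` of vectors in `ℤ_p^n` with at least one unit
coordinate; its normalized measure is Haar measure restricted to `U` divided by `μ U`.
A nonzero element `a` of the dual `(ℤ[1/p]/ℤ)^n` with `v_p(a) = p^ℓ` is modelled by
`a' : (ℤ/p^ℓℤ)^n` of exact additive order `p^ℓ` (so that `a = a'/p^ℓ`); the pairing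
`⟨u, a⟩ = 0` in `ℚ/ℤ` becomes `∑ i, a' i * (u i mod p^ℓ) = 0` in `ℤ/p^ℓℤ`.
The set of `u ∈ ℙ ℤ_p^(n-1)` with `⟨u, a⟩ = 0` (a union of unit-scaling classes, measured
by its preimage in `U`) has normalized measure
`|ℙ(ℤ/p^ℓℤ)^(n-2)| / |ℙ(ℤ/p^ℓℤ)^(n-1)|`. -/
theorem measure_orthogonal (p : ℕ) [Fact p.Prime] (n ℓ : ℕ) (hn : 2 ≤ n) (hℓ : 1 ≤ ℓ)
    (a' : Fin n → ZMod (p ^ ℓ)) (ha : addOrderOf a' = p ^ ℓ) :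
    padicHaar p n {u : Fin n → ℤ_[p] | (∃ i, IsUnit (u i)) ∧
        ∑ i, a' i * PadicInt.toZModPow ℓ (u i) = 0} /
      padicHaar p n {u : Fin n → ℤ_[p] | ∃ i, IsUnit (u i)} =
    (projCardUnit (p ^ ℓ) (n - 1) : ENNReal) / (projCardUnit (p ^ ℓ) n : ENNReal) := by
  classical
  haveI : NeZero (p ^ ℓ) := ⟨pow_ne_zero _ (Fact.out (p := p.Prime)).pos.ne'⟩
  obtain ⟨m, rfl⟩ : ∃ m, n = m + 1 := ⟨n - 1, by omega⟩
  -- a' has a unit coordinate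
  have hunit : ∃ i, IsUnit (a' i) := by
    by_contra hno
    push_neg at hno
    choose y hy using fun i => aux_dvd_of_not_isUnit hℓ (hno i)
    have hz : (p ^ (ℓ - 1)) • a' = 0 := by
      funext i
      have : (p : ZMod (p^ℓ)) ^ (ℓ - 1) * (p * y i) = ((p:ZMod (p^ℓ))^ℓ) * y i := by
        rw [← mul_assoc, ← pow_succ]
        congr 2
        omega
      simp only [Pi.smul_apply, Pi.zero_apply, nsmul_eq_mul, hy i]
      rw [Nat.cast_pow, this, ← Nat.cast_pow, ZMod.natCast_self, zero_mul]
    have hdvd := addOrderOf_dvd_of_nsmul_eq_zero hz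
    rw [ha] at hdvd
    have h1 := Nat.le_of_dvd (pow_pos (Fact.out (p := p.Prime)).pos _) hdvd
    have h2 : p ^ (ℓ - 1) < p ^ ℓ :=
      Nat.pow_lt_pow_right (Fact.out (p := p.Prime)).one_lt (by omega)
    omega
  obtain ⟨i₀, hi₀⟩ := hunit
  -- rewrite both sets as preimages
  have hset1 : {u : Fin (m+1) → ℤ_[p] | (∃ i, IsUnit (u i)) ∧
      ∑ i, a' i * PadicInt.toZModPow ℓ (u i) = 0} =
      (fun u i => PadicInt.toZModPow ℓ (u i)) ⁻¹'
        {v : Fin (m+1) → ZMod (p^ℓ) | (∃ i, IsUnit (v i)) ∧ ∑ i, a' i * v i = 0} := by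
    ext u
    simp only [Set.mem_setOf_eq, Set.mem_preimage]
    exact and_congr_left' (exists_congr fun i => (aux_padic_isUnit_iff hℓ (u i)).symm)
  have hset2 : {u : Fin (m+1) → ℤ_[p] | ∃ i, IsUnit (u i)} =
      (fun u i => PadicInt.toZModPow ℓ (u i)) ⁻¹'
        {v : Fin (m+1) → ZMod (p^ℓ) | ∃ i, IsUnit (v i)} := by
    ext u
    simp only [Set.mem_setOf_eq, Set.mem_preimage]
    exact exists_congr fun i => (aux_padic_isUnit_iff hℓ (u i)).symm
  rw [hset1, hset2,
    padicHaar_preimage p (m+1) ℓ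
      {v : Fin (m+1) → ZMod (p^ℓ) | (∃ i, IsUnit (v i)) ∧ ∑ i, a' i * v i = 0},
    padicHaar_preimage p (m+1) ℓ {v : Fin (m+1) → ZMod (p^ℓ) | ∃ i, IsUnit (v i)}]
  set c := padicHaar p (m+1) ((fun u i => PadicInt.toZModPow ℓ (u i)) ⁻¹' {0}) with hc
  -- c is neither 0 nor ∞
  have htotal : (Nat.card (Set.univ : Set (Fin (m+1) → ZMod (p^ℓ))) : ENNReal) * c = 1 := by
    rw [← padicHaar_preimage, Set.preimage_univ, padicHaar_univ]
  have hKne : (Nat.card (Set.univ : Set (Fin (m+1) → ZMod (p^ℓ))) : ENNReal) ≠ 0 := by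
    simp only [ne_eq, Nat.cast_eq_zero]
    exact Nat.card_ne_zero.mpr ⟨⟨⟨fun _ => 0, trivial⟩⟩, inferInstance⟩
  have hc0 : c ≠ 0 := by
    intro h
    rw [h, mul_zero] at htotal
    exact zero_ne_one htotal
  have hctop : c ≠ ⊤ := by
    intro h
    rw [h, ENNReal.mul_top hKne] at htotal
    exact (ENNReal.top_ne_one htotal)
  -- cardinalities
  have hk1 : Nat.card {v : Fin (m+1) → ZMod (p^ℓ) |
      (∃ i, IsUnit (v i)) ∧ ∑ i, a' i * v i = 0} =
      projCardUnit (p^ℓ) m * Nat.card (ZMod (p^ℓ))ˣ :=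
    (hyperplane_card hℓ m a' i₀ hi₀).trans (card_unitVecs (p^ℓ) m)
  have hk2 : Nat.card {v : Fin (m+1) → ZMod (p^ℓ) | ∃ i, IsUnit (v i)} =
      projCardUnit (p^ℓ) (m+1) * Nat.card (ZMod (p^ℓ))ˣ :=
    card_unitVecs (p^ℓ) (m+1)
  rw [hk1, hk2]
  have hφ0 : (Nat.card (ZMod (p^ℓ))ˣ : ENNReal) ≠ 0 := by
    simp only [ne_eq, Nat.cast_eq_zero]
    exact Nat.card_ne_zero.mpr ⟨⟨1⟩, inferInstance⟩
  simp only [Nat.add_sub_cancel]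
  push_cast
  rw [ENNReal.mul_div_mul_right _ _ hc0 hctop,
    ENNReal.mul_div_mul_right _ _ hφ0 (ENNReal.natCast_ne_top _)]

end
end

section
/- Let $N \geq 1$, $n \geq 2$, and let $a' \in (\mathbb{Z}/N\mathbb{Z})^n$ have additive order exactly $N$. Then the number of points $u \in \mathbb{P}(\mathbb{Z}/N\mathbb{Z})^{n-1}$ with $\langle u, a' \rangle = 0$ equals $|\mathbb{P}(\mathbb{Z}/N\mathbb{Z})^{n-2}|$. -/
set_option maxHeartbeats 1000000

lemma exists_unit_add (N : ℕ) [NeZero N] (a b : ZMod N)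
    (h : ∃ x y : ZMod N, x * a + y * b = 1) :
    ∃ t : ℕ, IsUnit (a + (t : ZMod N) * b) := by
  obtain ⟨x, y, hxy⟩ := h
  set A := a.val with hAdef
  set B := b.val with hBdef
  have hA : ((A : ℕ) : ZMod N) = a := by rw [hAdef, ZMod.natCast_val, ZMod.cast_id]
  have hB : ((B : ℕ) : ZMod N) = b := by rw [hBdef, ZMod.natCast_val, ZMod.cast_id]
  have key : ∀ p : ℕ, p.Prime → p ∣ N → p ∣ A → p ∣ B → False := by
    intro p pp hpN hpA hpB
    haveI : Fact p.Prime := ⟨pp⟩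
    have hmap := congrArg (ZMod.castHom hpN (ZMod p)) hxy
    rw [map_add, map_mul, map_mul, map_one] at hmap
    have ha0 : ZMod.castHom hpN (ZMod p) a = 0 := by
      rw [← hA, map_natCast, ZMod.natCast_eq_zero_iff]
      exact hpA
    have hb0 : ZMod.castHom hpN (ZMod p) b = 0 := by
      rw [← hB, map_natCast, ZMod.natCast_eq_zero_iff]
      exact hpB
    rw [ha0, hb0] at hmap
    simp at hmap
  set t : ℕ := ∏ p ∈ N.primeFactors.filter (fun p => ¬ p ∣ A), p with ht
  have hcop : Nat.Coprime (A + t * B) N := by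
    rw [Nat.coprime_iff_gcd_eq_one]
    by_contra hg
    set g := Nat.gcd (A + t * B) N with hgdef
    have hgN : g ∣ N := Nat.gcd_dvd_right _ _
    have hg0 : g ≠ 0 := by
      intro h0
      have := Nat.eq_zero_of_gcd_eq_zero_right (hgdef ▸ h0 : Nat.gcd (A + t*B) N = 0)
      exact NeZero.ne N this
    set p := g.minFac with hpdef
    have pp : p.Prime := Nat.minFac_prime hg
    have hpN : p ∣ N := dvd_trans (Nat.minFac_dvd g) hgN
    have hpsum : p ∣ A + t * B := dvd_trans (Nat.minFac_dvd g) (Nat.gcd_dvd_left _ _)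
    have hdvdt_iff : p ∣ t → ¬ p ∣ A := by
      intro hpt
      rw [ht] at hpt
      obtain ⟨q, hq, hpq⟩ := (pp.prime.dvd_finset_prod_iff _).mp hpt
      rw [Finset.mem_filter] at hq
      have : p = q := (Nat.prime_dvd_prime_iff_eq pp (Nat.prime_of_mem_primeFactors hq.1)).mp hpq
      subst this
      exact hq.2
    by_cases hpA : p ∣ A
    · have hptB : p ∣ t * B := (Nat.dvd_add_right hpA).mp hpsum
      rcases (Nat.Prime.dvd_mul pp).mp hptB with h1 | h2
      · exact hdvdt_iff h1 hpA
      · exact key p pp hpN hpA h2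
    · have hpt : p ∣ t := by
        rw [ht]
        refine Finset.dvd_prod_of_mem _ ?_
        rw [Finset.mem_filter, Nat.mem_primeFactors]
        exact ⟨⟨pp, hpN, NeZero.ne N⟩, hpA⟩
      have : p ∣ A := (Nat.dvd_add_iff_left (hpt.mul_right B)).mpr hpsum
      exact hpA this
  have hunit : IsUnit ((A + t * B : ℕ) : ZMod N) := (ZMod.isUnit_iff_coprime _ N).mpr hcop
  refine ⟨t, ?_⟩
  have : ((A + t * B : ℕ) : ZMod N) = a + (t : ZMod N) * b := by
    push_cast
    rw [hA, hB]
  rwa [this] at hunit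

lemma span_range_top (N n : ℕ) (hN : 1 ≤ N) (a' : Fin n → ZMod N)
    (ha : addOrderOf a' = N) : Ideal.span (Set.range a') = ⊤ := by
  haveI : NeZero N := ⟨by omega⟩
  by_contra hI
  set I := Ideal.span (Set.range a') with hIdef
  set f := Int.castRingHom (ZMod N) with hfdef
  set J := I.comap f with hJdef
  have hJ : J ≠ ⊤ := by
    intro h
    apply hI
    rw [Ideal.eq_top_iff_one]
    have h1 : (1 : ℤ) ∈ J := h ▸ Submodule.mem_top
    have h2 := Ideal.mem_comap.mp h1
    simpa using h2
  obtain ⟨g, hg⟩ := (IsPrincipalIdealRing.principal J).principal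
  have hNJ : (N : ℤ) ∈ J := by
    show f (N : ℤ) ∈ I
    have : f (N : ℤ) = 0 := by simp [hfdef]
    rw [this]
    exact I.zero_mem
  have hvalJ : ∀ i, (((a' i).val : ℤ)) ∈ J := by
    intro i
    show f _ ∈ I
    have : f (((a' i).val : ℤ)) = a' i := by
      simp only [hfdef, Int.coe_castRingHom, Int.cast_natCast]
      rw [ZMod.natCast_val, ZMod.cast_id]
    rw [this]
    exact Ideal.subset_span ⟨i, rfl⟩
  rw [hg] at hNJ hvalJ hJ
  rw [Ideal.submodule_span_eq, Ideal.mem_span_singleton] at hNJ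
  have hgv : ∀ i, g ∣ ((a' i).val : ℤ) := by
    intro i
    have := hvalJ i
    rwa [Ideal.submodule_span_eq, Ideal.mem_span_singleton] at this
  have hgu : ¬ IsUnit g := by
    intro h
    exact hJ (by rw [Ideal.submodule_span_eq]; exact Ideal.span_singleton_eq_top.mpr h)
  have hg0 : g ≠ 0 := by
    intro h0
    rw [h0] at hNJ
    have : (N : ℤ) = 0 := zero_dvd_iff.mp hNJ
    have : N = 0 := by exact_mod_cast this
    omega
  set p := g.natAbs.minFac with hpdef
  have hgA1 : g.natAbs ≠ 1 := by
    intro h1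
    exact hgu (Int.isUnit_iff.mpr (Int.natAbs_eq_iff.mp h1))
  have pp : p.Prime := Nat.minFac_prime hgA1
  have hpN : p ∣ N := by
    have h1 : g.natAbs ∣ N := by
      have := Int.natAbs_dvd_natAbs.mpr hNJ
      simpa using this
    exact dvd_trans (Nat.minFac_dvd _) h1
  have hpv : ∀ i, p ∣ (a' i).val := by
    intro i
    have h1 : g.natAbs ∣ (a' i).val := by
      have := Int.natAbs_dvd_natAbs.mpr (hgv i)
      rwa [Int.natAbs_natCast] at this
    exact dvd_trans (Nat.minFac_dvd _) h1
  -- contradiction via additive order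
  have hsm : (N / p) • a' = 0 := by
    funext i
    obtain ⟨w, hw⟩ := hpv i
    have hval : ((a' i).val : ZMod N) = a' i := by rw [ZMod.natCast_val, ZMod.cast_id]
    have : (N / p) • a' i = (((N / p) * (a' i).val : ℕ) : ZMod N) := by
      push_cast
      rw [hval, nsmul_eq_mul]
    rw [Pi.smul_apply, Pi.zero_apply, this, hw, ← mul_assoc, Nat.div_mul_cancel hpN]
    push_cast
    simp
  have hdvd : N ∣ N / p := by
    have h := addOrderOf_dvd_of_nsmul_eq_zero hsm
    rwa [ha] at h
  have hlt : N / p < N := Nat.div_lt_self (by omega) pp.one_lt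
  have hpos : 0 < N / p := Nat.div_pos (Nat.le_of_dvd (by omega) hpN) pp.pos
  have := Nat.le_of_dvd hpos hdvd
  omega

/-- An equivariant map on vectors induces a map on projective classes. -/
def mapProj {N k l : ℕ} (f : (Fin k → ZMod N) → (Fin l → ZMod N))
    (hf : ∀ (c : (ZMod N)ˣ) (v : Fin k → ZMod N), f (c • v) = c • f v) :
    ProjClasses N k → ProjClasses N l :=
  Quotient.lift (fun v => Quotient.mk (MulAction.orbitRel (ZMod N)ˣ (Fin l → ZMod N)) (f v))
    (by
      intro v v' hvv'
      obtain ⟨c, hcc⟩ := hvv'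
      apply Quotient.sound
      have h1 : f v = c • f v' := by rw [← hcc, hf]
      rw [h1]
      exact MulAction.mem_orbit _ c)

/-- Cardinality of `ℙ (ZMod N)^(m-1)`: classes, under unit scaling, of vectors
`v ∈ (ZMod N)^m` whose reduction mod every prime `q ∣ N` is nonzero. -/
noncomputable def projCard (N m : ℕ) : ℕ :=
  Nat.card {x : ProjClasses N m //
    ∃ v : Fin m → ZMod N, Quotient.mk (MulAction.orbitRel (ZMod N)ˣ (Fin m → ZMod N)) v = x ∧
      ∀ (q : ℕ) (_ : q.Prime) (h : q ∣ N), ∃ i, ZMod.castHom h (ZMod q) (v i) ≠ 0}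

/-- If `a' ∈ (ℤ/Nℤ)^n` has additive order exactly `N`, the number of points
`u ∈ ℙ(ℤ/Nℤ)^(n-1)` with `⟨u, a'⟩ = 0` (a condition invariant under unit scaling)
equals `|ℙ(ℤ/Nℤ)^(n-2)|`. -/
theorem card_orthogonal (N n : ℕ) (hN : 1 ≤ N) (hn : 2 ≤ n) (a' : Fin n → ZMod N)
    (ha : addOrderOf a' = N) :
    Nat.card {x : ProjClasses N n //
      ∃ v : Fin n → ZMod N, Quotient.mk (MulAction.orbitRel (ZMod N)ˣ (Fin n → ZMod N)) v = x ∧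
        (∀ (q : ℕ) (_ : q.Prime) (h : q ∣ N), ∃ i, ZMod.castHom h (ZMod q) (v i) ≠ 0) ∧
        ∑ i, v i * a' i = 0} = projCard N (n - 1) := by
  haveI : NeZero N := ⟨by omega⟩
  obtain ⟨m, rfl⟩ : ∃ m, n = m + 2 := ⟨n - 2, by omega⟩
  haveI : IsPrincipalIdealRing (ZMod N) :=
    IsPrincipalIdealRing.of_surjective (Int.castRingHom (ZMod N)) ZMod.intCast_surjective
  set at' : Fin (m + 1) → ZMod N := fun j => a' j.succ with hat
  -- obtain a unit of the form a' 0 + ∑ r j * at' j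
  obtain ⟨r, U, hU⟩ :
      ∃ (r : Fin (m+1) → ZMod N) (U : (ZMod N)ˣ), (U : ZMod N) = a' 0 + ∑ j, r j * at' j := by
    have hspan := span_range_top N (m+2) hN a' ha
    obtain ⟨b, hb⟩ := (IsPrincipalIdealRing.principal (Ideal.span (Set.range at'))).principal
    have hbmem : b ∈ Ideal.span (Set.range at') := by
      rw [hb]; exact Submodule.mem_span_singleton_self b
    obtain ⟨s, hs⟩ := (Submodule.mem_span_range_iff_exists_fun (ZMod N)).mp hbmem
    have htop : Ideal.span {a' 0, b} = ⊤ := by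
      rw [eq_top_iff, ← hspan, Ideal.span_le]
      rintro _ ⟨i, rfl⟩
      refine Fin.cases ?_ ?_ i
      · exact Ideal.subset_span (Set.mem_insert _ _)
      · intro j
        have h1 : a' j.succ ∈ Ideal.span (Set.range at') := Ideal.subset_span ⟨j, rfl⟩
        rw [hb, Ideal.submodule_span_eq, Ideal.mem_span_singleton] at h1
        obtain ⟨z, hz⟩ := h1
        rw [hz]
        exact Ideal.mul_mem_right z _ (Ideal.subset_span (Set.mem_insert_of_mem _ rfl))
    have h1top : (1 : ZMod N) ∈ Ideal.span {a' 0, b} := htop ▸ Submodule.mem_top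
    obtain ⟨x, y, hxy⟩ := Ideal.mem_span_pair.mp h1top
    obtain ⟨t, hu⟩ := exists_unit_add N (a' 0) b ⟨x, y, hxy⟩
    obtain ⟨U, hUu⟩ := hu
    refine ⟨fun j => (t : ZMod N) * s j, U, ?_⟩
    rw [hUu]
    congr 1
    rw [← hs, Finset.mul_sum]
    exact Finset.sum_congr rfl fun j _ => by rw [smul_eq_mul]; ring
  -- the two maps
  set φ : (Fin (m+2) → ZMod N) → (Fin (m+2) → ZMod N) :=
    fun v => Fin.cons (∑ i, v i * a' i) (fun j => v j.succ - v 0 * r j) with hφ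
  set γ : (Fin (m+2) → ZMod N) → ZMod N :=
    fun x => (↑U⁻¹ : ZMod N) * (x 0 - ∑ j, x j.succ * at' j) with hγ
  set ψ : (Fin (m+2) → ZMod N) → (Fin (m+2) → ZMod N) :=
    fun x => Fin.cons (γ x) (fun j => x j.succ + γ x * r j) with hψ
  have huu : (↑U⁻¹ : ZMod N) * (↑U : ZMod N) = 1 := U.inv_mul
  have hsum : ∀ v : Fin (m+2) → ZMod N,
      ∑ i, v i * a' i = v 0 * a' 0 + ∑ j, v j.succ * at' j := fun v =>
    Fin.sum_univ_succ (fun i => v i * a' i)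
  have hγφ : ∀ v, γ (φ v) = v 0 := by
    intro v
    simp only [hγ, hφ, Fin.cons_zero, Fin.cons_succ]
    rw [hsum v]
    have h1 : ∑ j, (v j.succ - v 0 * r j) * at' j
        = (∑ j, v j.succ * at' j) - v 0 * ∑ j, r j * at' j := by
      rw [Finset.mul_sum, ← Finset.sum_sub_distrib]
      exact Finset.sum_congr rfl fun j _ => by ring
    rw [h1]
    have h2 : v 0 * a' 0 + (∑ j, v j.succ * at' j)
        - ((∑ j, v j.succ * at' j) - v 0 * ∑ j, r j * at' j)
        = v 0 * (a' 0 + ∑ j, r j * at' j) := by ring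
    rw [h2, ← hU, mul_comm (v 0), ← mul_assoc, huu, one_mul]
  have hψφ : ∀ v, ψ (φ v) = v := by
    intro v
    funext i
    refine Fin.cases ?_ ?_ i
    · show ψ (φ v) 0 = v 0
      simp only [hψ, Fin.cons_zero]
      exact hγφ v
    · intro j
      show ψ (φ v) j.succ = v j.succ
      simp only [hψ, Fin.cons_succ, hγφ v]
      simp only [hφ, Fin.cons_succ]
      ring
  have hφψ : ∀ x, φ (ψ x) = x := by
    intro x
    have hz : ψ x 0 = γ x := by simp [hψ]
    have hsc : ∀ j, ψ x j.succ = x j.succ + γ x * r j := fun j => by simp [hψ]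
    funext i
    refine Fin.cases ?_ ?_ i
    · show φ (ψ x) 0 = x 0
      simp only [hφ, Fin.cons_zero]
      rw [hsum (ψ x), hz]
      have h1 : ∑ j, ψ x j.succ * at' j
          = (∑ j, x j.succ * at' j) + γ x * ∑ j, r j * at' j := by
        rw [Finset.mul_sum, ← Finset.sum_add_distrib]
        exact Finset.sum_congr rfl fun j _ => by rw [hsc j]; ring
      rw [h1]
      have h2 : γ x * a' 0 + ((∑ j, x j.succ * at' j) + γ x * ∑ j, r j * at' j)
          = γ x * (a' 0 + ∑ j, r j * at' j) + ∑ j, x j.succ * at' j := by ring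
      rw [h2, ← hU]
      simp only [hγ]
      linear_combination (x 0 - ∑ j, x j.succ * at' j) * huu
    · intro j
      show φ (ψ x) j.succ = x j.succ
      simp only [hφ, Fin.cons_succ, hz, hsc]
      ring
  -- unit-scaling equivariance
  have hc : ∀ (c : (ZMod N)ˣ) (w : Fin (m+2) → ZMod N) (k : Fin (m+2)),
      (c • w) k = (↑c : ZMod N) * w k := by
    intro c w k
    simp [Units.smul_def]
  have hφs : ∀ (c : (ZMod N)ˣ) v, φ (c • v) = c • φ v := by
    intro c v
    funext i
    rw [hc c (φ v) i]
    refine Fin.cases ?_ ?_ i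
    · simp only [hφ, Fin.cons_zero]
      rw [Finset.mul_sum]
      exact Finset.sum_congr rfl fun i _ => by rw [hc]; ring
    · intro j
      simp only [hφ, Fin.cons_succ, hc]
      ring
  have hγs : ∀ (c : (ZMod N)ˣ) x, γ (c • x) = (↑c : ZMod N) * γ x := by
    intro c x
    simp only [hγ, hc]
    have h1 : ∑ j, ((c : ZMod N) * x j.succ) * at' j = (c : ZMod N) * ∑ j, x j.succ * at' j := by
      rw [Finset.mul_sum]
      exact Finset.sum_congr rfl fun j _ => by ring
    rw [h1]
    ring
  have hψs : ∀ (c : (ZMod N)ˣ) x, ψ (c • x) = c • ψ x := by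
    intro c x
    funext i
    rw [hc c (ψ x) i]
    refine Fin.cases ?_ ?_ i
    · simp only [hψ, Fin.cons_zero, hγs]
    · intro j
      simp only [hψ, Fin.cons_succ, hγs, hc]
      ring
  -- primitivity transfer
  have kerφ : ∀ (q : ℕ) (h : q ∣ N) (w : Fin (m+2) → ZMod N),
      (∀ i, ZMod.castHom h (ZMod q) (w i) = 0) →
      (∀ i, ZMod.castHom h (ZMod q) (φ w i) = 0) := by
    intro q h w hw i
    refine Fin.cases ?_ ?_ i
    · simp only [hφ, Fin.cons_zero, map_sum, map_mul]
      simp [hw]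
    · intro j
      simp only [hφ, Fin.cons_succ, map_sub, map_mul]
      simp [hw]
  have kerψ : ∀ (q : ℕ) (h : q ∣ N) (w : Fin (m+2) → ZMod N),
      (∀ i, ZMod.castHom h (ZMod q) (w i) = 0) →
      (∀ i, ZMod.castHom h (ZMod q) (ψ w i) = 0) := by
    intro q h w hw i
    have hγ0 : ZMod.castHom h (ZMod q) (γ w) = 0 := by
      simp only [hγ, map_mul, map_sub, map_sum]
      simp [hw]
    refine Fin.cases ?_ ?_ i
    · simp only [hψ, Fin.cons_zero]
      exact hγ0
    · intro j
      simp only [hψ, Fin.cons_succ, map_add, map_mul, hγ0, hw]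
      simp
  have hprimφ : ∀ (v : Fin (m+2) → ZMod N),
      (∀ (q : ℕ) (_ : q.Prime) (h : q ∣ N), ∃ i, ZMod.castHom h (ZMod q) (v i) ≠ 0) ↔
      (∀ (q : ℕ) (_ : q.Prime) (h : q ∣ N), ∃ i, ZMod.castHom h (ZMod q) (φ v i) ≠ 0) := by
    intro v
    constructor
    · intro hv q hq h
      by_contra hno
      push_neg at hno
      have h1 := kerψ q h (φ v) hno
      rw [hψφ v] at h1
      obtain ⟨i, hi⟩ := hv q hq h
      exact hi (h1 i)
    · intro hv q hq h
      by_contra hno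
      push_neg at hno
      have h1 := kerφ q h v hno
      obtain ⟨i, hi⟩ := hv q hq h
      exact hi (h1 i)
  -- pointwise smul on smaller tuples
  have hc' : ∀ {k : ℕ} (c : (ZMod N)ˣ) (w : Fin k → ZMod N) (i : Fin k),
      (c • w) i = (↑c : ZMod N) * w i := by
    intro k c w i
    simp [Units.smul_def]
  have tail_smul : ∀ (c : (ZMod N)ˣ) (x : Fin (m+2) → ZMod N),
      Fin.tail (c • x) = c • Fin.tail x := by
    intro c x
    funext j
    show (c • x) j.succ = (c • Fin.tail x) j
    rw [hc, hc']
    rfl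
  have cons0_smul : ∀ (c : (ZMod N)ˣ) (w : Fin (m+1) → ZMod N),
      (Fin.cons (0 : ZMod N) (c • w) : Fin (m+2) → ZMod N)
        = c • (Fin.cons (0 : ZMod N) w : Fin (m+2) → ZMod N) := by
    intro c w
    funext i
    refine Fin.cases ?_ ?_ i
    · rw [hc]
      simp
    · intro j
      rw [hc]
      simp only [Fin.cons_succ]
      rw [hc']
  -- the maps on projective classes
  set Fq : ProjClasses N (m+2) → ProjClasses N (m+1) :=
    mapProj (fun v => Fin.tail (φ v))
      (fun c v => by
        show Fin.tail (φ (c • v)) = c • Fin.tail (φ v)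
        rw [hφs, tail_smul]) with hFq
  set Gq : ProjClasses N (m+1) → ProjClasses N (m+2) :=
    mapProj (fun w => ψ (Fin.cons (0 : ZMod N) w))
      (fun c w => by
        show ψ (Fin.cons (0 : ZMod N) (c • w)) = c • ψ (Fin.cons (0 : ZMod N) w)
        rw [cons0_smul, hψs]) with hGq
  -- primitivity facts
  have prim_tail : ∀ (v : Fin (m+2) → ZMod N),
      (∀ (q : ℕ) (_ : q.Prime) (h : q ∣ N), ∃ i, ZMod.castHom h (ZMod q) (v i) ≠ 0) →
      (∑ i, v i * a' i = 0) →
      ∀ (q : ℕ) (_ : q.Prime) (h : q ∣ N),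
        ∃ j, ZMod.castHom h (ZMod q) (Fin.tail (φ v) j) ≠ 0 := by
    intro v hP hs0 q hq h
    obtain ⟨i, hi⟩ := (hprimφ v).mp hP q hq h
    revert hi
    refine Fin.cases ?_ ?_ i
    · intro hi
      exfalso
      apply hi
      have h0 : φ v 0 = 0 := by
        simp only [hφ, Fin.cons_zero]
        exact hs0
      rw [h0, map_zero]
    · intro j hi
      exact ⟨j, hi⟩
  have prim_cons : ∀ (w : Fin (m+1) → ZMod N),
      (∀ (q : ℕ) (_ : q.Prime) (h : q ∣ N), ∃ j, ZMod.castHom h (ZMod q) (w j) ≠ 0) →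
      ∀ (q : ℕ) (_ : q.Prime) (h : q ∣ N),
        ∃ i, ZMod.castHom h (ZMod q) (ψ (Fin.cons (0 : ZMod N) w) i) ≠ 0 := by
    intro w hP q hq h
    by_contra hno
    push_neg at hno
    have h1 := kerφ q h _ hno
    rw [hφψ] at h1
    obtain ⟨j, hj⟩ := hP q hq h
    apply hj
    have := h1 j.succ
    rwa [Fin.cons_succ] at this
  have sum_cons : ∀ (w : Fin (m+1) → ZMod N),
      ∑ i, (ψ (Fin.cons (0 : ZMod N) w)) i * a' i = 0 := by
    intro w
    have h1 : φ (ψ (Fin.cons (0 : ZMod N) w)) 0 = 0 := by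
      rw [hφψ]
      simp
    have h2 : φ (ψ (Fin.cons (0 : ZMod N) w)) 0
        = ∑ i, ψ (Fin.cons (0 : ZMod N) w) i * a' i := by
      simp only [hφ, Fin.cons_zero]
    rw [← h2, h1]
  -- the bijection
  exact Nat.card_congr
    { toFun := fun p =>
        ⟨Fq p.1, by
          obtain ⟨v, hmk, hP, hs0⟩ := p.2
          exact ⟨Fin.tail (φ v), by rw [← hmk, hFq]; rfl, prim_tail v hP hs0⟩⟩
      invFun := fun p =>
        ⟨Gq p.1, by
          obtain ⟨w, hmk, hP⟩ := p.2
          exact ⟨ψ (Fin.cons (0 : ZMod N) w), by rw [← hmk, hGq]; rfl,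
            prim_cons w hP, sum_cons w⟩⟩
      left_inv := by
        intro p
        apply Subtype.ext
        show Gq (Fq p.1) = p.1
        obtain ⟨v, hmk, hP, hs0⟩ := p.2
        rw [← hmk]
        have e1 : Fq (Quotient.mk (MulAction.orbitRel (ZMod N)ˣ (Fin (m+2) → ZMod N)) v)
            = Quotient.mk (MulAction.orbitRel (ZMod N)ˣ (Fin (m+1) → ZMod N))
              (Fin.tail (φ v)) := rfl
        have e2 : Gq (Quotient.mk (MulAction.orbitRel (ZMod N)ˣ (Fin (m+1) → ZMod N))
              (Fin.tail (φ v)))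
            = Quotient.mk (MulAction.orbitRel (ZMod N)ˣ (Fin (m+2) → ZMod N))
              (ψ (Fin.cons (0 : ZMod N) (Fin.tail (φ v)))) := rfl
        rw [e1, e2]
        have h0 : φ v 0 = 0 := by
          simp only [hφ, Fin.cons_zero]
          exact hs0
        have h3 : Fin.cons (0 : ZMod N) (Fin.tail (φ v)) = φ v := by
          conv_lhs => rw [← h0]
          exact Fin.cons_self_tail (φ v)
        rw [h3, hψφ]
      right_inv := by
        intro p
        apply Subtype.ext
        show Fq (Gq p.1) = p.1
        obtain ⟨w, hmk, hP⟩ := p.2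
        rw [← hmk]
        show Quotient.mk (MulAction.orbitRel (ZMod N)ˣ (Fin (m+1) → ZMod N))
              (Fin.tail (φ (ψ (Fin.cons (0 : ZMod N) w))))
            = Quotient.mk (MulAction.orbitRel (ZMod N)ˣ (Fin (m+1) → ZMod N)) w
        rw [hφψ, Fin.tail_cons] }
end

section
/- Let $N, n \geq 1$ and let $f : (\mathbb{Z}/N\mathbb{Z})^n \to \mathbb{Q}_{\geq 0}$ satisfy $\sum_x f(x)^n = 1$ (hence $0 \leq f \leq 1$). Define $g(x) = \lceil N f(x) \rceil / N$. Then $g \geq f$ pointwise, and $\sum_x g(x)^n \leq (2^n + 1) \sum_x f(x)^n$. -/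
open Finset

/-- Rounding up to multiples of `1/N`: if `f : (ℤ/Nℤ)^n → ℚ≥0` has `∑ f^n = 1` and
`g(x) = ⌈N f(x)⌉ / N`, then `g ≥ f` pointwise and `∑ g^n ≤ (2^n + 1) ∑ f^n`. -/
theorem rounding_bound (N n : ℕ) [NeZero N] (hn : 1 ≤ n)
    (f : (Fin n → ZMod N) → ℚ) (hf0 : ∀ x, 0 ≤ f x)
    (hsum : ∑ x : Fin n → ZMod N, f x ^ n = 1)
    (g : (Fin n → ZMod N) → ℚ)
    (hg : ∀ x, g x = (⌈(N : ℚ) * f x⌉ : ℚ) / (N : ℚ)) :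
    (∀ x, f x ≤ g x) ∧
      ∑ x : Fin n → ZMod N, g x ^ n ≤ (2 ^ n + 1) * ∑ x : Fin n → ZMod N, f x ^ n := by
  have hN : (0 : ℚ) < N := by
    exact_mod_cast Nat.pos_of_ne_zero (NeZero.ne N)
  have hfg : ∀ x, f x ≤ g x := by
    intro x
    rw [hg]
    rw [le_div_iff₀ hN]
    calc f x * N = (N : ℚ) * f x := mul_comm _ _
    _ ≤ _ := Int.le_ceil _
  refine ⟨hfg, ?_⟩
  have hg0 : ∀ x, 0 ≤ g x := fun x => (hf0 x).trans (hfg x)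
  have key : ∀ x, g x ^ n ≤ (1 / (N : ℚ)) ^ n + 2 ^ n * f x ^ n := by
    intro x
    rcases lt_or_ge (f x) (1 / (N : ℚ)) with h | h
    · -- small case: g x ≤ 1/N
      have hgle : g x ≤ 1 / (N : ℚ) := by
        rw [hg]
        have hle : (N : ℚ) * f x ≤ ((1:ℤ):ℚ) := by
          push_cast
          rw [mul_comm]
          exact le_of_lt ((lt_div_iff₀ hN).mp h)
        have hc : ((⌈(N : ℚ) * f x⌉ : ℚ)) ≤ 1 := by
          exact_mod_cast Int.ceil_le.mpr hle
        gcongr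
      have := pow_le_pow_left₀ (hg0 x) hgle n
      have h2 : 0 ≤ 2 ^ n * f x ^ n :=
        mul_nonneg (by positivity) (pow_nonneg (hf0 x) n)
      linarith
    · -- large case: g x ≤ 2 * f x
      have hgle : g x ≤ 2 * f x := by
        rw [hg, div_le_iff₀ hN]
        have h1 : ((⌈(N : ℚ) * f x⌉ : ℚ)) < (N : ℚ) * f x + 1 := Int.ceil_lt_add_one _
        have h2 : (1 : ℚ) ≤ (N : ℚ) * f x := by
          have := (div_le_iff₀ hN).mp h
          linarith
        have h3 : 0 ≤ (N : ℚ) * f x := mul_nonneg hN.le (hf0 x)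
        nlinarith
      calc g x ^ n ≤ (2 * f x) ^ n := pow_le_pow_left₀ (hg0 x) hgle n
      _ = 2 ^ n * f x ^ n := mul_pow _ _ _
      _ ≤ (1 / (N : ℚ)) ^ n + 2 ^ n * f x ^ n := le_add_of_nonneg_left (by positivity)
  calc ∑ x : Fin n → ZMod N, g x ^ n
      ≤ ∑ x : Fin n → ZMod N, ((1 / (N : ℚ)) ^ n + 2 ^ n * f x ^ n) :=
        Finset.sum_le_sum fun x _ => key x
    _ = (Fintype.card (Fin n → ZMod N) : ℚ) * (1 / (N : ℚ)) ^ n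
        + 2 ^ n * ∑ x : Fin n → ZMod N, f x ^ n := by
        rw [Finset.sum_add_distrib, Finset.sum_const, Finset.mul_sum]
        simp [nsmul_eq_mul]
    _ ≤ (2 ^ n + 1) * ∑ x : Fin n → ZMod N, f x ^ n := by
        rw [hsum]
        have hcard : (Fintype.card (Fin n → ZMod N) : ℚ) = (N : ℚ) ^ n := by
          simp [Fintype.card_fun, ZMod.card]
        rw [hcard]
        rw [div_pow, one_pow, mul_one_div, div_self (by positivity : ((N:ℚ)^n) ≠ 0)]
        ring_nf
        exact le_refl _
end

section
/- Let $n \geq 2$ and $\mathbb{F} = \mathbb{Z}_p$. For $f : \mathbb{Z}_p^n \to \mathbb{R}_{\geq 0}$, $u \in \mathbb{P}\mathbb{Z}_p^{n-1}$, and $U \in \mathrm{Gr}(\mathbb{Z}_p^n, 2)$ containing $u$, let $w \in \mathbb{P} Q_u$ be the unique direction with $u, w$ spanning $U$. Then the maximal 2-plane operator applied to $f$ at $U$ equals the maximal line operator applied to the X-ray transform $f_u$ at $w$: $\sup_{a \in \mathbb{Z}_p^n} \int_{x \in U} f(a + x)\, d\mu_U = \sup_{b \in Q_u} \int_{t \in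 \mathbb{Z}_p} f_u(b + t w)\, dt$. -/
open MeasureTheory ENNReal

noncomputable section

/-- The Haar probability measure on the space of `2 × n` matrices over `ℤ_p`. -/
def matHaar (p : ℕ) [Fact p.Prime] (n : ℕ) : Measure (Fin 2 → Fin n → ℤ_[p]) :=
  Measure.addHaarMeasure ⟨⟨Set.univ, isCompact_univ⟩, by simp⟩

/-- A `2 × n` matrix over `ℤ_p` has a unit `2 × 2` minor; its rows then span a rank-2
free direct summand of `ℤ_p^n`, i.e. an element of `Gr(ℤ_p^n, 2)`. -/
def unitMinor (p : ℕ) [Fact p.Prime] (n : ℕ) (g : Fin 2 → Fin n → ℤ_[p]) : Prop :=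
  ∃ i j : Fin n, IsUnit (g 0 i * g 1 j - g 0 j * g 1 i)

/-- `Gr(ℤ_p^n, 2)`, parametrized by `2 × n` matrices with a unit `2 × 2` minor (the maps
below depend only on the submodule spanned by the rows). -/
def grSet (p : ℕ) [Fact p.Prime] (n : ℕ) : Set (Fin 2 → Fin n → ℤ_[p]) :=
  {g | unitMinor p n g}

/-- The normalized measure `ν` on `Gr(ℤ_p^n, 2)` induced by Haar measure: the normalized
restriction of Haar measure on matrix space to matrices with a unit `2 × 2` minor. -/
def grMeasure (p : ℕ) [Fact p.Prime] (n : ℕ) : Measure (Fin 2 → Fin n → ℤ_[p]) :=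
  (matHaar p n (grSet p n))⁻¹ • (matHaar p n).restrict (grSet p n)

/-- The maximal 2-plane operator: `𝒩² f (U) = sup_a ∫_{x ∈ U} f(a + x) dμ_U`, where the
2-plane `U` is spanned by the rows of `g` and `μ_U` is its Haar probability measure,
parametrized by `(s₀, s₁) ↦ s₀ g₀ + s₁ g₁`. -/
def maxOp2 (p : ℕ) [Fact p.Prime] (n : ℕ) (f : (Fin n → ℤ_[p]) → ℝ≥0∞)
    (g : Fin 2 → Fin n → ℤ_[p]) : ℝ≥0∞ :=
  ⨆ a : Fin n → ℤ_[p],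
    ∫⁻ s : Fin 2 → ℤ_[p], f (fun j => a j + s 0 * g 0 j + s 1 * g 1 j) ∂(padicHaar p 2)

/-- The Haar probability measure on `ℤ_p`. -/
def haarZp (p : ℕ) [Fact p.Prime] : Measure ℤ_[p] :=
  Measure.addHaarMeasure ⟨⟨Set.univ, isCompact_univ⟩, by simp⟩

/-- The X-ray transform of `f : ℤ_p^n → ℝ≥0∞` along `u`, lifted to `ℤ_p^n` (it is
invariant under translation by `u`, hence descends to `Q_u = ℤ_p^n/⟨u⟩`). -/
def xrayE (p : ℕ) [Fact p.Prime] (n : ℕ) (f : (Fin n → ℤ_[p]) → ℝ≥0∞)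
    (u : Fin n → ℤ_[p]) (x : Fin n → ℤ_[p]) : ℝ≥0∞ :=
  ∫⁻ t, f (x + t • u) ∂(haarZp p)

instance (p : ℕ) [Fact p.Prime] : (haarZp p).IsAddHaarMeasure :=
  Measure.isAddHaarMeasure_addHaarMeasure _

instance (p : ℕ) [Fact p.Prime] : IsProbabilityMeasure (haarZp p) :=
  ⟨Measure.addHaarMeasure_self (K₀ := ⟨⟨Set.univ, isCompact_univ⟩, by simp⟩)⟩

lemma padicHaar_eq_pi (p : ℕ) [Fact p.Prime] (n : ℕ) :
    padicHaar p n = Measure.pi (fun _ : Fin n => haarZp p) := by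
  have h := Measure.addHaarMeasure_unique (G := Fin n → ℤ_[p])
    (μ := Measure.pi (fun _ : Fin n => haarZp p))
    ⟨⟨Set.univ, isCompact_univ⟩, by simp⟩
  rw [padicHaar, h]
  have h1 : (Measure.pi (fun _ : Fin n => haarZp p)) Set.univ = 1 := by simp
  simp [h1]

/-- For a 2-plane `U ∈ Gr(ℤ_p^n, 2)` spanned by `u ∈ ℙℤ_p^{n-1}` and the direction
`w ∈ ℙ Q_u`, the maximal 2-plane operator at `U` equals the maximal line operator of the
X-ray transform `f_u` at `w`:
`sup_a ∫_{x ∈ U} f(a + x) dμ_U = sup_b ∫_{t ∈ ℤ_p} f_u(b + t w) dt`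
(the supremum over `b ∈ Q_u` is computed as a supremum over `b ∈ ℤ_p^n`, which agrees
since the lifted `f_u` is invariant under translation by `u`). -/
theorem maxOp2_eq_maxOp1_xray (p : ℕ) [Fact p.Prime] (n : ℕ) (hn : 2 ≤ n)
    (f : (Fin n → ℤ_[p]) → ℝ≥0∞) (hf : Measurable f)
    (u w : Fin n → ℤ_[p]) (hu : ∃ i, IsUnit (u i))
    (huw : unitMinor p n ![u, w]) :
    maxOp2 p n f ![u, w] =
      ⨆ b : Fin n → ℤ_[p],
        ∫⁻ t, xrayE p n f u (fun j => b j + t * w j) ∂(haarZp p) := by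
  unfold maxOp2 xrayE
  rw [padicHaar_eq_pi]
  refine iSup_congr fun a => ?_
  set μ := haarZp p
  set e := MeasurableEquiv.piFinTwo (fun _ : Fin 2 => ℤ_[p])
  have hG : Measurable fun s : Fin 2 → ℤ_[p] =>
      f (fun j => a j + s 0 * (![u, w] : Fin 2 → Fin n → ℤ_[p]) 0 j
        + s 1 * (![u, w] : Fin 2 → Fin n → ℤ_[p]) 1 j) := by
    apply hf.comp
    apply measurable_pi_lambda
    intro j
    exact (measurable_const.add ((measurable_pi_apply 0).mul_const _)).add
      ((measurable_pi_apply 1).mul_const _)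
  have mp : MeasurePreserving e.symm (μ.prod μ) (Measure.pi fun _ : Fin 2 => μ) :=
    (measurePreserving_piFinTwo (fun _ : Fin 2 => μ)).symm
  rw [← mp.lintegral_comp hG]
  rw [lintegral_prod_symm (fun z : ℤ_[p] × ℤ_[p] =>
    f fun j => a j + e.symm z 0 * (![u, w] : Fin 2 → Fin n → ℤ_[p]) 0 j
      + e.symm z 1 * (![u, w] : Fin 2 → Fin n → ℤ_[p]) 1 j)
    ((hG.comp e.symm.measurable).aemeasurable)]
  refine lintegral_congr fun t => ?_
  refine lintegral_congr fun s => ?_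
  congr 1
  funext j
  have h0 : e.symm (s, t) 0 = s := by
    simp [e, MeasurableEquiv.piFinTwo, piFinTwoEquiv]
  have h1 : e.symm (s, t) 1 = t := by
    simp [e, MeasurableEquiv.piFinTwo, piFinTwoEquiv]
  simp only [h0, h1, Pi.add_apply, Pi.smul_apply, smul_eq_mul,
    Matrix.cons_val_zero, Matrix.cons_val_one, Matrix.head_cons]
  ring

end
end
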